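/- arXiv:0710.0055 — 6 statements merged into one kernel-verified Lean document; each statement's English description precedes it below -/
import Mathlib

section
/- Let z ∈ C¹([0,T], ℝᵏ), f ∈ C([0,T], ℝᵏ) and b ∈ ℝᵏ. If for every t ∈ [0,T] one has ∫₀ᵗ D_ξΩ(s,0,z(s)) ż(s) ds + z(0) = b + ∫₀ᵗ f(s) ds, then for every t ∈ [0,T] one has z(t) = b + ∫₀ᵗ D_ξΩ(0,s,Ω(s,0,z(s))) f(s) ds. -/
/-!
Differentiating `Ω 0 t (Ω t 0 ξ) = ξ` in `ξ` shows that `DΩ(0,s,Ω(s,0,ξ))` is a left inverse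
of `DΩ(s,0,ξ)`. The hypothesis says that the continuous functions `s ↦ DΩ(s,0,z s) ż(s)` and `f`
have the same primitives on `[0,T]`, so they coincide there; hence the integrand on the right is
`DΩ(0,s,Ω(s,0,z s)) DΩ(s,0,z s) ż(s) = ż(s)`, and the fundamental theorem of calculus gives `z`.
-/

open MeasureTheory intervalIntegral

theorem HasFDerivAt.comp_eq_id_of_leftInverse {E F : Type*}
    [NormedAddCommGroup E] [NormedSpace ℝ E] [NormedAddCommGroup F] [NormedSpace ℝ F]
    {φ : E → F} {ψ : F → E} {φ' : E →L[ℝ] F} {ψ' : F →L[ℝ] E} {x : E}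
    (hφ : HasFDerivAt φ φ' x) (hψ : HasFDerivAt ψ ψ' (φ x)) (hinv : Function.LeftInverse ψ φ) :
    ψ'.comp φ' = ContinuousLinearMap.id ℝ E := by
  have hcomp : HasFDerivAt (ψ ∘ φ) (ψ'.comp φ') x := hψ.comp x hφ
  rw [hinv.comp_eq_id] at hcomp
  exact hcomp.unique (hasFDerivAt_id x)

theorem eqOn_Icc_of_forall_integral_eq {E : Type*} [NormedAddCommGroup E] [NormedSpace ℝ E]
    [CompleteSpace E] {f g : ℝ → E} {a b : ℝ} (hab : a < b)
    (hf : ContinuousOn f (Set.Icc a b)) (hg : ContinuousOn g (Set.Icc a b))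
    (hfg : ∀ t ∈ Set.Icc a b, ∫ s in a..t, f s = ∫ s in a..t, g s) :
    Set.EqOn f g (Set.Icc a b) := by
  intro t ht
  have : Fact (t ∈ Set.Icc a b) := ⟨ht⟩
  have hsub : Set.uIcc a t ⊆ Set.Icc a b := Set.uIcc_subset_Icc (Set.left_mem_Icc.2 hab.le) ht
  have primitive {h : ℝ → E} (hh : ContinuousOn h (Set.Icc a b)) :
      HasDerivWithinAt (fun u => ∫ s in a..u, h s) (h t) (Set.Icc a b) t :=
    integral_hasDerivWithinAt_right ((hh.mono hsub).intervalIntegrable)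
      ⟨Set.Icc a b, self_mem_nhdsWithin, hh.aestronglyMeasurable measurableSet_Icc⟩ (hh t ht)
  have hf' : HasDerivWithinAt (fun u => ∫ s in a..u, g s) (f t) (Set.Icc a b) t :=
    (primitive hf).congr (fun u hu => (hfg u hu).symm) (hfg t ht).symm
  exact (uniqueDiffOn_Icc hab t ht).eq_deriv _ hf' (primitive hg)

theorem stmt0_general {k : ℕ} (T : ℝ) (hT : 0 < T)
    (Ω : ℝ → ℝ → (Fin k → ℝ) → (Fin k → ℝ))
    (DΩ : ℝ → ℝ → (Fin k → ℝ) → ((Fin k → ℝ) →L[ℝ] (Fin k → ℝ)))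
    (hDΩcont : Continuous fun p : ℝ × ℝ × (Fin k → ℝ) => DΩ p.1 p.2.1 p.2.2)
    (hΩderiv : ∀ t t₀ ξ, HasFDerivAt (fun x => Ω t t₀ x) (DΩ t t₀ ξ) ξ)
    (hΩinv : ∀ t ∈ Set.Icc (0 : ℝ) T, ∀ ξ, Ω 0 t (Ω t 0 ξ) = ξ)
    (z z' : ℝ → Fin k → ℝ) (f : ℝ → Fin k → ℝ) (b : Fin k → ℝ)
    (hz : ∀ t ∈ Set.Icc (0 : ℝ) T, HasDerivAt z (z' t) t)
    (hz' : ContinuousOn z' (Set.Icc (0 : ℝ) T))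
    (hf : ContinuousOn f (Set.Icc (0 : ℝ) T))
    (hyp : ∀ t ∈ Set.Icc (0 : ℝ) T,
      (∫ s in (0 : ℝ)..t, DΩ s 0 (z s) (z' s)) + z 0 = b + ∫ s in (0 : ℝ)..t, f s) :
    ∀ t ∈ Set.Icc (0 : ℝ) T,
      z t = b + ∫ s in (0 : ℝ)..t, DΩ 0 s (Ω s 0 (z s)) (f s) := by
  have hz0 : z 0 = b := by simpa using hyp 0 ⟨le_rfl, hT.le⟩
  have hzc : ContinuousOn z (Set.Icc 0 T) := fun s hs => (hz s hs).continuousAt.continuousWithinAt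
  have hgc : ContinuousOn (fun s => DΩ s 0 (z s) (z' s)) (Set.Icc 0 T) :=
    (hDΩcont.comp_continuousOn (continuousOn_id.prodMk (continuousOn_const.prodMk hzc))).clm_apply
      hz'
  have hgf : Set.EqOn (fun s => DΩ s 0 (z s) (z' s)) f (Set.Icc 0 T) :=
    eqOn_Icc_of_forall_integral_eq hT hgc hf fun t ht => by
      simpa [hz0, add_comm] using hyp t ht
  have hintegrand : ∀ s ∈ Set.Icc 0 T, DΩ 0 s (Ω s 0 (z s)) (f s) = z' s := fun s hs => by
    rw [← hgf hs, ← ContinuousLinearMap.comp_apply,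
      (hΩderiv s 0 (z s)).comp_eq_id_of_leftInverse (hΩderiv 0 s _) (hΩinv s hs)]
    rfl
  intro t ht
  have hsub : Set.uIcc 0 t ⊆ Set.Icc 0 T := Set.uIcc_subset_Icc (Set.left_mem_Icc.2 hT.le) ht
  rw [integral_congr fun s hs => hintegrand s (hsub hs),
    integral_eq_sub_of_hasDerivAt (fun s hs => hz s (hsub hs)) (hz'.mono hsub).intervalIntegrable,
    hz0, add_sub_cancel]

/-- Lemma 1 of the paper.  Fix `T > 0` and `k ∈ ℕ`.  Let
`Ω : ℝ × ℝ × ℝᵏ → ℝᵏ` be jointly continuous, continuously differentiable in its third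
argument with derivative `DΩ`, and satisfy `Ω 0 t (Ω t 0 ξ) = ξ` for `t ∈ [0,T]`.
If `z ∈ C¹([0,T],ℝᵏ)`, `f ∈ C([0,T],ℝᵏ)`, `b ∈ ℝᵏ` and for every `t ∈ [0,T]`
`∫₀ᵗ DΩ(s,0,z s) ż(s) ds + z 0 = b + ∫₀ᵗ f s ds`, then for every `t ∈ [0,T]`
`z t = b + ∫₀ᵗ DΩ(0,s,Ω(s,0,z s)) (f s) ds`. -/
theorem stmt0 {k : ℕ} (T : ℝ) (hT : 0 < T)
    (Ω : ℝ → ℝ → (Fin k → ℝ) → (Fin k → ℝ))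
    (DΩ : ℝ → ℝ → (Fin k → ℝ) → ((Fin k → ℝ) →L[ℝ] (Fin k → ℝ)))
    (hΩcont : Continuous fun p : ℝ × ℝ × (Fin k → ℝ) => Ω p.1 p.2.1 p.2.2)
    (hDΩcont : Continuous fun p : ℝ × ℝ × (Fin k → ℝ) => DΩ p.1 p.2.1 p.2.2)
    (hΩderiv : ∀ t t₀ ξ, HasFDerivAt (fun x => Ω t t₀ x) (DΩ t t₀ ξ) ξ)
    (hΩinv : ∀ t ∈ Set.Icc (0 : ℝ) T, ∀ ξ, Ω 0 t (Ω t 0 ξ) = ξ)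
    (z z' : ℝ → Fin k → ℝ) (f : ℝ → Fin k → ℝ) (b : Fin k → ℝ)
    (hz : ∀ t ∈ Set.Icc (0 : ℝ) T, HasDerivAt z (z' t) t)
    (hz' : ContinuousOn z' (Set.Icc (0 : ℝ) T))
    (hf : ContinuousOn f (Set.Icc (0 : ℝ) T))
    (hyp : ∀ t ∈ Set.Icc (0 : ℝ) T,
      (∫ s in (0 : ℝ)..t, DΩ s 0 (z s) (z' s)) + z 0 = b + ∫ s in (0 : ℝ)..t, f s) :
    ∀ t ∈ Set.Icc (0 : ℝ) T,
      z t = b + ∫ s in (0 : ℝ)..t, DΩ 0 s (Ω s 0 (z s)) (f s) :=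
  stmt0_general T hT Ω DΩ hDΩcont hΩderiv hΩinv z z' f b hz hz' hf hyp
end

section
/- The matrix I − e^{−A₊T} is invertible, the improper integral ∫_{−∞}^{t} e^{−A₊(t−s)} g(s) ds converges for every t ∈ ℝ, and for every t ∈ [0,T] one has e^{−A₊ t}(I − e^{−A₊ T})^{−1} ∫₀^T e^{−A₊(T−s)} g(s) ds + ∫₀^t e^{−A₊(t−s)} g(s) ds = ∫_{−∞}^{t} e^{−A₊(t−s)} g(s) ds. -/
/-!
Put `F t = ∫_{-∞}^t e^{-A(t-s)} g(s) ds` (`pastIntegral A g t`); it converges as `g` is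
bounded (it is continuous and periodic) and the semigroup decays exponentially. `F` is
`T`-periodic and satisfies the variation-of-constants formula
`F t = e^{-At} F 0 + ∫_0^t e^{-A(t-s)} g(s) ds`; at `t = T` this says
`(I - e^{-AT}) F 0 = ∫_0^T e^{-A(T-s)} g(s) ds`. Finally `I - e^{-AT}` is invertible because
`‖(e^{-AT})ⁿ‖ ≤ c e^{-δnT} < 1` for large `n`.
-/

open MeasureTheory intervalIntegral Filter Topology

theorem isUnit_one_sub_of_isUnit_one_sub_pow {R : Type*} [Ring R] {x : R} {n : ℕ}
    (h : IsUnit (1 - x ^ n)) : IsUnit (1 - x) := by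
  have hcomm : Commute (1 - x) (∑ i ∈ Finset.range n, x ^ i) :=
    Commute.sum_right _ _ _ fun i _ => (Commute.one_left _).sub_left (Commute.self_pow x i)
  rw [← mul_neg_geom_sum] at h
  exact (hcomm.isUnit_mul_iff.mp h).1

theorem isUnit_one_sub_of_norm_pow_lt_one {R : Type*} [NormedRing R] [HasSummableGeomSeries R]
    {x : R} {n : ℕ} (h : ‖x ^ n‖ < 1) : IsUnit (1 - x) :=
  isUnit_one_sub_of_isUnit_one_sub_pow (isUnit_one_sub_of_norm_lt_one h)

theorem integrableOn_Iic_of_norm_le_exp_mul {E : Type*} [NormedAddCommGroup E] {f : ℝ → E}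
    {C δ t : ℝ} (hδ : 0 < δ) (hf : AEStronglyMeasurable f (volume.restrict (Set.Iic t)))
    (hbound : ∀ s ≤ t, ‖f s‖ ≤ C * Real.exp (δ * s)) : IntegrableOn f (Set.Iic t) :=
  Integrable.mono' ((integrableOn_exp_mul_Iic hδ t).const_mul C) hf
    ((ae_restrict_mem measurableSet_Iic).mono hbound)

section ExpNegSMul

variable {𝔸 : Type*} [NormedRing 𝔸] [NormedAlgebra ℝ 𝔸] [CompleteSpace 𝔸]

theorem exp_neg_add_smul (A : 𝔸) (a b : ℝ) :
    NormedSpace.exp (-((a + b) • A)) =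
      NormedSpace.exp (-(a • A)) * NormedSpace.exp (-(b • A)) := by
  -- the `NormedSpace.exp` API is stated for `ℚ`-normed algebras
  let +nondep : NormedAlgebra ℚ 𝔸 := .restrictScalars ℚ ℝ 𝔸
  rw [add_smul, neg_add]
  exact NormedSpace.exp_add_of_commute
    (((Commute.refl A).smul_left a).smul_right b).neg_left.neg_right

theorem exp_neg_smul_pow (A : 𝔸) (a : ℝ) (n : ℕ) :
    NormedSpace.exp (-(a • A)) ^ n = NormedSpace.exp (-((n * a) • A)) := by
  let +nondep : NormedAlgebra ℚ 𝔸 := .restrictScalars ℚ ℝ 𝔸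
  rw [← NormedSpace.exp_nsmul, mul_smul, Nat.cast_smul_eq_nsmul, smul_neg]

theorem continuous_exp_neg_smul (A : 𝔸) :
    Continuous fun t : ℝ => NormedSpace.exp (-(t • A)) := by
  let +nondep : NormedAlgebra ℚ 𝔸 := .restrictScalars ℚ ℝ 𝔸
  exact NormedSpace.exp_continuous.comp (continuous_id.smul continuous_const).neg

theorem isUnit_one_sub_exp_neg_smul_of_norm_le {A : 𝔸} {c δ T : ℝ} (hδ : 0 < δ) (hT : 0 < T)
    (hA : ∀ t : ℝ, 0 ≤ t → ‖NormedSpace.exp (-(t • A))‖ ≤ c * Real.exp (-δ * t)) :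
    IsUnit (1 - NormedSpace.exp (-(T • A))) := by
  have hdecay : Tendsto (fun n : ℕ => c * Real.exp (-δ * (n * T))) atTop (𝓝 0) := by
    simpa using (Real.tendsto_exp_atBot.comp ((tendsto_natCast_atTop_atTop.atTop_mul_const
      hT).const_mul_atTop_of_neg (neg_neg_of_pos hδ))).const_mul c
  obtain ⟨n, hn⟩ := (hdecay.eventually (gt_mem_nhds one_pos)).exists
  refine isUnit_one_sub_of_norm_pow_lt_one (n := n) ?_
  rw [exp_neg_smul_pow]
  exact (hA _ (by positivity)).trans_lt hn

end ExpNegSMul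

section PastIntegral

variable {E : Type*} [NormedAddCommGroup E] [NormedSpace ℝ E] (A : E →L[ℝ] E) (g : ℝ → E)

noncomputable def pastIntegral (t : ℝ) : E :=
  ∫ s in Set.Iic t, NormedSpace.exp (-((t - s) • A)) (g s)

theorem integrableOn_exp_neg_smul_apply_Iic [CompleteSpace E] {c δ M : ℝ} (hδ : 0 < δ)
    (hA : ∀ t : ℝ, 0 ≤ t → ‖NormedSpace.exp (-(t • A))‖ ≤ c * Real.exp (-δ * t))
    (hg : Continuous g) (hM : ∀ s, ‖g s‖ ≤ M) (t : ℝ) :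
    IntegrableOn (fun s => NormedSpace.exp (-((t - s) • A)) (g s)) (Set.Iic t) := by
  refine integrableOn_Iic_of_norm_le_exp_mul (C := c * M * Real.exp (-δ * t)) hδ
    (((continuous_exp_neg_smul A).comp (continuous_const.sub continuous_id)).clm_apply
      hg).aestronglyMeasurable fun s hs => ?_
  have hts : 0 ≤ t - s := sub_nonneg.mpr hs
  calc ‖NormedSpace.exp (-((t - s) • A)) (g s)‖
      ≤ ‖NormedSpace.exp (-((t - s) • A))‖ * ‖g s‖ := ContinuousLinearMap.le_opNorm _ _
    _ ≤ c * Real.exp (-δ * (t - s)) * M :=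
        mul_le_mul (hA _ hts) (hM s) (norm_nonneg _) ((norm_nonneg _).trans (hA _ hts))
    _ = c * M * Real.exp (-δ * t) * Real.exp (δ * s) := by
        rw [show -δ * (t - s) = -δ * t + δ * s by ring, Real.exp_add]
        ring

theorem pastIntegral_add_period {T : ℝ} (hg : Function.Periodic g T) (t : ℝ) :
    pastIntegral A g (t + T) = pastIntegral A g t := by
  rw [pastIntegral, ← (measurePreserving_add_right volume T).setIntegral_preimage_emb
    (measurableEmbedding_addRight T)]
  simp [pastIntegral, hg _]

theorem pastIntegral_eq_exp_apply_add [CompleteSpace E]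
    (h₀ : IntegrableOn (fun s => NormedSpace.exp (-((0 - s) • A)) (g s)) (Set.Iic 0))
    {t : ℝ} (ht : IntegrableOn (fun s => NormedSpace.exp (-((t - s) • A)) (g s)) (Set.Iic t)) :
    pastIntegral A g t = NormedSpace.exp (-(t • A)) (pastIntegral A g 0) +
      ∫ s in (0 : ℝ)..t, NormedSpace.exp (-((t - s) • A)) (g s) := by
  have hfactor : ∀ s, NormedSpace.exp (-((t - s) • A)) (g s) =
      NormedSpace.exp (-(t • A)) (NormedSpace.exp (-((0 - s) • A)) (g s)) := fun s => by
    rw [show t - s = t + (0 - s) by ring]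
    exact congrArg (· (g s)) (exp_neg_add_smul A t (0 - s))
  have h₀' : IntegrableOn (fun s => NormedSpace.exp (-((t - s) • A)) (g s)) (Set.Iic 0) := by
    simp only [IntegrableOn, hfactor]
    exact ContinuousLinearMap.integrable_comp _ h₀
  have hpull : ∫ s in Set.Iic 0, NormedSpace.exp (-((t - s) • A)) (g s) =
      NormedSpace.exp (-(t • A)) (pastIntegral A g 0) := by
    simp only [hfactor]
    exact ContinuousLinearMap.integral_comp_comm _ h₀
  rw [← integral_Iic_sub_Iic h₀' ht, hpull, pastIntegral, add_sub_cancel]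

end PastIntegral

theorem stmt6_general {mp : ℕ} (T : ℝ) (hT : 0 < T)
    (A : (Fin mp → ℝ) →L[ℝ] (Fin mp → ℝ)) (c δ : ℝ) (hδ : 0 < δ)
    (hA : ∀ t : ℝ, 0 ≤ t → ‖NormedSpace.exp (-(t • A))‖ ≤ c * Real.exp (-δ * t))
    (g : ℝ → Fin mp → ℝ) (hg : Continuous g) (hgper : ∀ s, g (s + T) = g s) :
    IsUnit (1 - NormedSpace.exp (-(T • A))) ∧
    (∀ t : ℝ, IntegrableOn (fun s => NormedSpace.exp (-((t - s) • A)) (g s)) (Set.Iic t)) ∧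
    ∀ t ∈ Set.Icc (0 : ℝ) T,
      NormedSpace.exp (-(t • A))
          (Ring.inverse (1 - NormedSpace.exp (-(T • A)))
            (∫ s in (0 : ℝ)..T, NormedSpace.exp (-((T - s) • A)) (g s))) +
        (∫ s in (0 : ℝ)..t, NormedSpace.exp (-((t - s) • A)) (g s)) =
      ∫ s in Set.Iic t, NormedSpace.exp (-((t - s) • A)) (g s) := by
  have hunit := isUnit_one_sub_exp_neg_smul_of_norm_le hδ hT hA
  obtain ⟨M, hM⟩ := isBounded_iff_forall_norm_le.mp
    (Function.Periodic.isBounded_of_continuous hgper hT.ne' hg)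
  have hint := integrableOn_exp_neg_smul_apply_Iic A g hδ hA hg fun s => hM _ ⟨s, rfl⟩
  have hvar t := pastIntegral_eq_exp_apply_add A g (hint 0) (hint t)
  have hper : pastIntegral A g T = pastIntegral A g 0 := by
    simpa using pastIntegral_add_period A g hgper 0
  have hfixed : (1 - NormedSpace.exp (-(T • A))) (pastIntegral A g 0) =
      ∫ s in (0 : ℝ)..T, NormedSpace.exp (-((T - s) • A)) (g s) := by
    rw [sub_apply, one_apply_eq_self, sub_eq_iff_eq_add']
    simpa only [hper] using hvar T
  have hsolve : Ring.inverse (1 - NormedSpace.exp (-(T • A)))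
      (∫ s in (0 : ℝ)..T, NormedSpace.exp (-((T - s) • A)) (g s)) = pastIntegral A g 0 := by
    rw [← hfixed, ← mul_apply_eq_comp, Ring.inverse_mul_cancel _ hunit, one_apply_eq_self]
  refine ⟨hunit, hint, fun t _ => ?_⟩
  rw [hsolve]
  exact (hvar t).symm

/-- Fix `T > 0`.  Let `A₊` be a real square matrix (here, a linear
operator on `ℝ^{mp}`) with constants `c > 0`, `δ > 0` such that
`‖e^{−A₊ t}‖ ≤ c e^{−δt}` for all `t ≥ 0`, and let `g : ℝ → ℝ^{mp}` be continuous and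
`T`-periodic.  Then `I − e^{−A₊T}` is invertible, the improper integral
`∫_{−∞}^{t} e^{−A₊(t−s)} g(s) ds` converges for every `t ∈ ℝ`, and for every
`t ∈ [0,T]`:
`e^{−A₊t}(I − e^{−A₊T})⁻¹ ∫₀^T e^{−A₊(T−s)} g(s) ds + ∫₀^t e^{−A₊(t−s)} g(s) ds
  = ∫_{−∞}^{t} e^{−A₊(t−s)} g(s) ds`. -/
theorem stmt6 {mp : ℕ} (T : ℝ) (hT : 0 < T)
    (A : (Fin mp → ℝ) →L[ℝ] (Fin mp → ℝ)) (c δ : ℝ) (hc : 0 < c) (hδ : 0 < δ)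
    (hA : ∀ t : ℝ, 0 ≤ t → ‖NormedSpace.exp (-(t • A))‖ ≤ c * Real.exp (-δ * t))
    (g : ℝ → Fin mp → ℝ) (hg : Continuous g) (hgper : ∀ s, g (s + T) = g s) :
    IsUnit (1 - NormedSpace.exp (-(T • A))) ∧
    (∀ t : ℝ, IntegrableOn (fun s => NormedSpace.exp (-((t - s) • A)) (g s)) (Set.Iic t)) ∧
    ∀ t ∈ Set.Icc (0 : ℝ) T,
      NormedSpace.exp (-(t • A))
          (Ring.inverse (1 - NormedSpace.exp (-(T • A)))
            (∫ s in (0 : ℝ)..T, NormedSpace.exp (-((T - s) • A)) (g s))) +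
        (∫ s in (0 : ℝ)..t, NormedSpace.exp (-((t - s) • A)) (g s)) =
      ∫ s in Set.Iic t, NormedSpace.exp (-((t - s) • A)) (g s) :=
  stmt6_general T hT A c δ hδ hA g hg hgper
end

section
/- The matrix e^{A₋T} − I is invertible, the improper integral ∫_{t}^{+∞} e^{A₋(s−t)} g(s) ds converges for every t ∈ ℝ, and for every t ∈ [0,T] one has e^{A₋(T−t)}(e^{A₋ T} − I)^{−1} ∫₀^T e^{A₋ s} g(s) ds − ∫_t^T e^{A₋(s−t)} g(s) ds = −∫_{t}^{+∞} e^{A₋(s−t)} g(s) ds. -/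
/-!
Let `F t = ∫_t^∞ e^{(s-t)A} g(s) ds`; it converges because the semigroup decays exponentially
and the periodic `g` is bounded. Cutting the integral at `T` and factoring the semigroup out of
the tail gives `F t = ∫_t^T e^{(s-t)A} g(s) ds + e^{(T-t)A} F T`, and periodicity of `g` gives
`F T = F 0`. At `t = 0` this says `(e^{TA} - I) F 0 = -∫_0^T e^{sA} g(s) ds`, which determines
`F 0`, because `‖e^{nTA}‖ ≤ c e^{-nδT} < 1` for large `n` makes `e^{TA} - I` invertible.
-/

open MeasureTheory intervalIntegral NormedSpace Set

section Exponential

variable {𝕂 𝔸 : Type*} [RCLike 𝕂] [NormedRing 𝔸] [NormedAlgebra 𝕂 𝔸] [CompleteSpace 𝔸]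

theorem NormedSpace.exp_add_smul (x : 𝔸) (a b : 𝕂) :
    exp ((a + b) • x) = exp (a • x) * exp (b • x) := by
  let : NormedAlgebra ℚ 𝔸 := .restrictScalars ℚ 𝕂 𝔸
  rw [add_smul]
  exact exp_add_of_commute (((Commute.refl x).smul_left a).smul_right b)

theorem NormedSpace.exp_smul_pow (x : 𝔸) (a : 𝕂) (n : ℕ) :
    exp (a • x) ^ n = exp ((n * a) • x) := by
  induction n with
  | zero => simp
  | succ n ih => rw [pow_succ, ih, ← exp_add_smul]; push_cast; ring_nf

theorem NormedSpace.continuous_exp_smul (x : 𝔸) : Continuous fun a : 𝕂 => exp (a • x) := by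
  let : NormedAlgebra ℚ 𝔸 := .restrictScalars ℚ 𝕂 𝔸
  exact exp_continuous.comp (continuous_id.smul continuous_const)

end Exponential

theorem isUnit_sub_one_of_norm_pow_lt_one {R : Type*} [NormedRing R] [HasSummableGeomSeries R]
    {x : R} {n : ℕ} (hx : ‖x ^ n‖ < 1) : IsUnit (x - 1) := by
  have hgeom : IsUnit ((∑ i ∈ Finset.range n, x ^ i) * (x - 1)) := by
    rw [geom_sum_mul, ← neg_sub]
    exact (Units.oneSub _ hx).isUnit.neg
  have hcomm : Commute (∑ i ∈ Finset.range n, x ^ i) (x - 1) :=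
    (Commute.sum_left _ _ _ fun i _ => (Commute.refl x).pow_left i).sub_right (Commute.one_right _)
  exact (hcomm.isUnit_mul_iff.mp hgeom).2

section Decay

variable {E : Type*} [NormedAddCommGroup E] [NormedSpace ℝ E]
  (A : E →L[ℝ] E)

noncomputable def tailIntegral (g : ℝ → E) (t : ℝ) : E := ∫ s in Ici t, exp ((s - t) • A) (g s)

variable {g : ℝ → E}

theorem Function.Periodic.tailIntegral_add_period {T : ℝ} (hg : Function.Periodic g T) (t : ℝ) :
    tailIntegral A g (t + T) = tailIntegral A g t := by
  have hpre : (· + T) ⁻¹' Ici (t + T) = Ici t := by ext; simp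
  rw [tailIntegral, tailIntegral, ← hpre,
    ← (measurePreserving_add_right volume T).setIntegral_preimage_emb
      (MeasurableEquiv.addRight T).measurableEmbedding]
  refine setIntegral_congr_fun (hpre ▸ measurableSet_Ici) fun s _ => ?_
  simp only [hg s, add_sub_add_right_eq_sub]

variable [CompleteSpace E]

theorem tailIntegral_eq_intervalIntegral_add
    (hint : ∀ t, IntegrableOn (fun s => exp ((s - t) • A) (g s)) (Ici t)) {t u : ℝ} (htu : t ≤ u) :
    tailIntegral A g t =
      (∫ s in t..u, exp ((s - t) • A) (g s)) + exp ((u - t) • A) (tailIntegral A g u) := by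
  have htail : exp ((u - t) • A) (tailIntegral A g u) = ∫ s in Ioi u, exp ((s - t) • A) (g s) := by
    rw [tailIntegral, integral_Ici_eq_integral_Ioi,
      ← ContinuousLinearMap.integral_comp_comm _ ((integrableOn_Ici_iff_integrableOn_Ioi).mp (hint u))]
    refine setIntegral_congr_fun measurableSet_Ioi fun s _ => ?_
    rw [← mul_apply_eq_comp, ← exp_add_smul A, sub_add_sub_cancel']
  have hint_t := (integrableOn_Ici_iff_integrableOn_Ioi).mp (hint t)
  rw [htail, tailIntegral, integral_Ici_eq_integral_Ioi,
    integral_interval_add_Ioi hint_t (hint_t.mono_set (Ioi_subset_Ioi htu))]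

theorem tailIntegral_period_eq
    (hint : ∀ t, IntegrableOn (fun s => exp ((s - t) • A) (g s)) (Ici t))
    {T : ℝ} (hT : 0 ≤ T) (hg : Function.Periodic g T) (hunit : IsUnit (exp (T • A) - 1)) :
    tailIntegral A g T = -Ring.inverse (exp (T • A) - 1) (∫ s in 0..T, exp (s • A) (g s)) := by
  have hperiod : tailIntegral A g T = tailIntegral A g 0 := by
    simpa using hg.tailIntegral_add_period A 0
  have hrec := tailIntegral_eq_intervalIntegral_add A hint hT
  simp only [sub_zero, hperiod] at hrec
  have hfix : (exp (T • A) - 1) (tailIntegral A g 0) = -∫ s in 0..T, exp (s • A) (g s) := by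
    rw [sub_apply, one_apply_eq_self]
    linear_combination (norm := abel) -hrec
  calc tailIntegral A g T = tailIntegral A g 0 := hperiod
    _ = (Ring.inverse (exp (T • A) - 1) * (exp (T • A) - 1)) (tailIntegral A g 0) := by
      rw [Ring.inverse_mul_cancel _ hunit, one_apply_eq_self]
    _ = _ := by rw [mul_apply_eq_comp, hfix, map_neg]

variable {A} {c δ : ℝ} (hA : ∀ t : ℝ, 0 ≤ t → ‖exp (t • A)‖ ≤ c * Real.exp (-δ * t))
include hA

theorem integrableOn_Ici_exp_smul_apply (hδ : 0 < δ) (hg : Continuous g) {M : ℝ}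
    (hM : ∀ s, ‖g s‖ ≤ M) (t : ℝ) :
    IntegrableOn (fun s => exp ((s - t) • A) (g s)) (Ici t) := by
  rw [integrableOn_Ici_iff_integrableOn_Ioi]
  have hmaj : IntegrableOn (fun s => c * M * Real.exp (δ * t) * Real.exp (-δ * s)) (Ioi t) :=
    (exp_neg_integrableOn_Ioi t hδ).const_mul _
  have hmeas : Continuous fun s => exp ((s - t) • A) (g s) :=
    ((continuous_exp_smul A).comp (continuous_sub_right t)).clm_apply hg
  refine hmaj.mono' hmeas.aestronglyMeasurable ?_
  filter_upwards [ae_restrict_mem measurableSet_Ioi] with s hs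
  have hexp := hA (s - t) (sub_nonneg.mpr (le_of_lt hs))
  calc ‖exp ((s - t) • A) (g s)‖ ≤ ‖exp ((s - t) • A)‖ * ‖g s‖ := ContinuousLinearMap.le_opNorm _ _
    _ ≤ c * Real.exp (-δ * (s - t)) * M :=
      mul_le_mul hexp (hM s) (norm_nonneg _) ((norm_nonneg _).trans hexp)
    _ = c * M * Real.exp (δ * t) * Real.exp (-δ * s) := by
      rw [mul_assoc (c * M), ← Real.exp_add]; ring_nf

theorem isUnit_exp_smul_sub_one (hδ : 0 < δ) {T : ℝ} (hT : 0 < T) : IsUnit (exp (T • A) - 1) := by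
  have hlim : Filter.Tendsto (fun n : ℕ => c * Real.exp (-δ * T) ^ n) Filter.atTop (nhds 0) := by
    simpa using (tendsto_pow_atTop_nhds_zero_of_lt_one (Real.exp_nonneg _)
      (Real.exp_lt_one_iff.mpr (by nlinarith))).const_mul c
  obtain ⟨n, hn⟩ := (hlim.eventually (gt_mem_nhds one_pos)).exists
  refine isUnit_sub_one_of_norm_pow_lt_one (n := n) ?_
  rw [exp_smul_pow A T n]
  refine (hA _ (by positivity)).trans_lt ?_
  rwa [← mul_assoc, mul_comm (-δ), mul_assoc, Real.exp_nat_mul]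

end Decay

theorem stmt7_general {mm : ℕ} (T : ℝ) (hT : 0 < T)
    (A : (Fin mm → ℝ) →L[ℝ] (Fin mm → ℝ)) (c δ : ℝ) (hδ : 0 < δ)
    (hA : ∀ t : ℝ, 0 ≤ t → ‖NormedSpace.exp (t • A)‖ ≤ c * Real.exp (-δ * t))
    (g : ℝ → Fin mm → ℝ) (hg : Continuous g) (hgper : ∀ s, g (s + T) = g s) :
    IsUnit (NormedSpace.exp (T • A) - 1) ∧
    (∀ t : ℝ, IntegrableOn (fun s => NormedSpace.exp ((s - t) • A) (g s)) (Set.Ici t)) ∧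
    ∀ t ∈ Set.Icc (0 : ℝ) T,
      NormedSpace.exp ((T - t) • A)
          (Ring.inverse (NormedSpace.exp (T • A) - 1)
            (∫ s in (0 : ℝ)..T, NormedSpace.exp (s • A) (g s))) -
        (∫ s in t..T, NormedSpace.exp ((s - t) • A) (g s)) =
      -∫ s in Set.Ici t, NormedSpace.exp ((s - t) • A) (g s) := by
  have hper : Function.Periodic g T := hgper
  obtain ⟨M, hM⟩ := isBounded_iff_forall_norm_le.mp (hper.isBounded_of_continuous hT.ne' hg)
  have hint := integrableOn_Ici_exp_smul_apply hA hδ hg (fun s => hM _ (mem_range_self s))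
  have hunit := isUnit_exp_smul_sub_one hA hδ hT
  refine ⟨hunit, hint, fun t ht => ?_⟩
  change _ = -tailIntegral A g t
  rw [tailIntegral_eq_intervalIntegral_add A hint ht.2,
    tailIntegral_period_eq A hint hT.le hper hunit, map_neg]
  abel

/-- Fix `T > 0`.  Let `A₋` be a real square matrix (here, a linear
operator on `ℝ^{m₋}`) with constants `c > 0`, `δ > 0` such that
`‖e^{A₋ t}‖ ≤ c e^{−δt}` for all `t ≥ 0`, and let `g : ℝ → ℝ^{m₋}` be continuous and
`T`-periodic.  Then `e^{A₋T} − I` is invertible, the improper integral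
`∫_{t}^{+∞} e^{A₋(s−t)} g(s) ds` converges for every `t ∈ ℝ`, and for every
`t ∈ [0,T]`:
`e^{A₋(T−t)}(e^{A₋T} − I)⁻¹ ∫₀^T e^{A₋ s} g(s) ds − ∫_t^T e^{A₋(s−t)} g(s) ds
  = −∫_{t}^{+∞} e^{A₋(s−t)} g(s) ds`. -/
theorem stmt7 {mm : ℕ} (T : ℝ) (hT : 0 < T)
    (A : (Fin mm → ℝ) →L[ℝ] (Fin mm → ℝ)) (c δ : ℝ) (hc : 0 < c) (hδ : 0 < δ)
    (hA : ∀ t : ℝ, 0 ≤ t → ‖NormedSpace.exp (t • A)‖ ≤ c * Real.exp (-δ * t))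
    (g : ℝ → Fin mm → ℝ) (hg : Continuous g) (hgper : ∀ s, g (s + T) = g s) :
    IsUnit (NormedSpace.exp (T • A) - 1) ∧
    (∀ t : ℝ, IntegrableOn (fun s => NormedSpace.exp ((s - t) • A) (g s)) (Set.Ici t)) ∧
    ∀ t ∈ Set.Icc (0 : ℝ) T,
      NormedSpace.exp ((T - t) • A)
          (Ring.inverse (NormedSpace.exp (T • A) - 1)
            (∫ s in (0 : ℝ)..T, NormedSpace.exp (s • A) (g s))) -
        (∫ s in t..T, NormedSpace.exp ((s - t) • A) (g s)) =
      -∫ s in Set.Ici t, NormedSpace.exp ((s - t) • A) (g s) :=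
  stmt7_general T hT A c δ hδ hA g hg hgper
end

section
/- For every θ ∈ ℝ, the matrix-valued function t ↦ K(t,θ) satisfies the variational equation dK/dt(t,θ) = Dψ(x₀(t+θ)) · K(t,θ), where Dψ(x₀(t+θ)) is the 2×2 matrix with rows (2sin²(t+θ), 2sin(t+θ)cos(t+θ)+1) and (2sin(t+θ)cos(t+θ)−1, 2cos²(t+θ)). -/
open Real Matrix

/-- `x₀(θ) = (sin θ, cos θ)`. -/
noncomputable def x0 (θ : ℝ) : Fin 2 → ℝ := ![Real.sin θ, Real.cos θ]

/-- `K(t,θ)` is the `2×2` matrix with rows `(cos(t+θ), e^{2t} sin(t+θ))` and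
`(−sin(t+θ), e^{2t} cos(t+θ))`. -/
noncomputable def K (t θ : ℝ) : Matrix (Fin 2) (Fin 2) ℝ :=
  !![Real.cos (t + θ), Real.exp (2 * t) * Real.sin (t + θ);
     -Real.sin (t + θ), Real.exp (2 * t) * Real.cos (t + θ)]

/-- `Dψ(x₀(a))`: the Jacobian matrix of `ψ` at `x₀(a)`, i.e. the `2×2` matrix with rows
`(2sin²a, 2 sin a cos a + 1)` and `(2 sin a cos a − 1, 2cos²a)`. -/
noncomputable def DpsiX0 (a : ℝ) : Matrix (Fin 2) (Fin 2) ℝ :=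
  !![2 * Real.sin a ^ 2, 2 * Real.sin a * Real.cos a + 1;
     2 * Real.sin a * Real.cos a - 1, 2 * Real.cos a ^ 2]

noncomputable def derivK (t θ : ℝ) : Matrix (Fin 2) (Fin 2) ℝ :=
  !![-sin (t + θ), exp (2 * t) * (2 * sin (t + θ) + cos (t + θ));
     -cos (t + θ), exp (2 * t) * (2 * cos (t + θ) - sin (t + θ))]

theorem hasDerivAt_K_apply (θ t : ℝ) (i j : Fin 2) :
    HasDerivAt (fun t => K t θ i j) (derivK t θ i j) t := by
  have hs : HasDerivAt (fun t => sin (t + θ)) (cos (t + θ)) t := by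
    simpa using ((hasDerivAt_id t).add_const θ).sin
  have hc : HasDerivAt (fun t => cos (t + θ)) (-sin (t + θ)) t := by
    simpa using ((hasDerivAt_id t).add_const θ).cos
  have he : HasDerivAt (fun t => exp (2 * t)) (exp (2 * t) * 2) t := by
    simpa using ((hasDerivAt_id t).const_mul 2).exp
  fin_cases i <;> fin_cases j <;> simp only [K, derivK, of_apply, cons_val', cons_val_zero,
    cons_val_one, empty_val', cons_val_fin_one, Fin.zero_eta, Fin.mk_one]
  · exact hc
  · exact (he.mul hs).congr_deriv (by ring)
  · exact hs.neg
  · exact (he.mul hc).congr_deriv (by ring)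

theorem DpsiX0_mul_K (θ t : ℝ) : DpsiX0 (t + θ) * K t θ = derivK t θ := by
  have hsc := sin_sq_add_cos_sq (t + θ)
  simp only [DpsiX0, K, derivK, mul_fin_two, EmbeddingLike.apply_eq_iff_eq, vecCons_inj, and_true]
  refine ⟨⟨?_, ?_⟩, ?_, ?_⟩
  · ring
  · linear_combination 2 * exp (2 * t) * sin (t + θ) * hsc
  · ring
  · linear_combination 2 * exp (2 * t) * cos (t + θ) * hsc

/-- identity (38) of the paper.  For every `θ ∈ ℝ` the matrix-valued
function `t ↦ K(t,θ)` satisfies the variational equation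
`dK/dt(t,θ) = Dψ(x₀(t+θ)) · K(t,θ)` (stated entrywise). -/
theorem stmt11 :
    ∀ θ t : ℝ, ∀ i j : Fin 2,
      HasDerivAt (fun t => K t θ i j) ((DpsiX0 (t + θ) * K t θ) i j) t := by
  intro θ t i j
  rw [DpsiX0_mul_K]
  exact hasDerivAt_K_apply θ t i j
end

section
/- For all s, θ ∈ ℝ one has ⟨∫_{s−2π}^{s} K(0,θ) K(τ,θ)⁻¹ φ(τ, x₀(τ+θ), y(τ)) dτ, ẋ₀(θ)⟩ = ∫₀^{2π} ⟨φ(r−θ, x₀(r), y(r−θ)), ẋ₀(r)⟩ dr, where ẋ₀(θ) = (cos θ, −sin θ) and ⟨·,·⟩ is the Euclidean inner product on ℝ². -/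
open Real Matrix MeasureTheory intervalIntegral

/-- `ẋ₀(θ) = (cos θ, −sin θ)`. -/
noncomputable def dx0 (θ : ℝ) : Fin 2 → ℝ := ![Real.cos θ, -Real.sin θ]

/-- Explicit inverse of `K t θ`. -/
noncomputable def B (t θ : ℝ) : Matrix (Fin 2) (Fin 2) ℝ :=
  !![Real.cos (t + θ), -Real.sin (t + θ);
     Real.exp (-(2 * t)) * Real.sin (t + θ), Real.exp (-(2 * t)) * Real.cos (t + θ)]

lemma K_inv (t θ : ℝ) : (K t θ)⁻¹ = B t θ := by
  apply Matrix.inv_eq_right_inv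
  have h1 : Real.exp (2 * t) * Real.exp (-(2 * t)) = 1 := by
    rw [← Real.exp_add]; simp
  have h2 := Real.sin_sq_add_cos_sq (t + θ)
  ext i j
  fin_cases i <;> fin_cases j <;>
    simp [K, B, Matrix.mul_apply, Fin.sum_univ_two, Matrix.one_apply] <;>
    first
    | linear_combination h2 + Real.sin (t + θ) ^ 2 * h1
    | linear_combination h2 + Real.cos (t + θ) ^ 2 * h1
    | linear_combination Real.sin (t + θ) * Real.cos (t + θ) * h1

lemma key (t θ : ℝ) (w : Fin 2 → ℝ) :
    ((K 0 θ * B t θ) *ᵥ w) ⬝ᵥ dx0 θ = w ⬝ᵥ dx0 (t + θ) := by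
  have h2 := Real.sin_sq_add_cos_sq θ
  simp [K, B, dx0, Matrix.mulVec, Matrix.mul_apply, dotProduct, Fin.sum_univ_two]
  linear_combination (Real.cos (t + θ) * w 0 - Real.sin (t + θ) * w 1) * h2

/-- the computation in Section 2 of the paper.  Let
`φ : ℝ × ℝ² × ℝ → ℝ²` be continuous and `2π`-periodic in its first argument, and let
`y : ℝ → ℝ` be a continuous `2π`-periodic function.  Then for all `s, θ ∈ ℝ`:
`⟨∫_{s−2π}^{s} K(0,θ)K(τ,θ)⁻¹ φ(τ, x₀(τ+θ), y(τ)) dτ, ẋ₀(θ)⟩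
  = ∫₀^{2π} ⟨φ(r−θ, x₀(r), y(r−θ)), ẋ₀(r)⟩ dr`,
where `⟨·,·⟩` is the Euclidean inner product on `ℝ²`. -/
theorem stmt13 (φ : ℝ → (Fin 2 → ℝ) → ℝ → (Fin 2 → ℝ))
    (hφ : Continuous fun p : ℝ × (Fin 2 → ℝ) × ℝ => φ p.1 p.2.1 p.2.2)
    (hφper : ∀ t x v, φ (t + 2 * π) x v = φ t x v)
    (y : ℝ → ℝ) (hy : Continuous y) (hyper : ∀ t, y (t + 2 * π) = y t) :
    ∀ s θ : ℝ,
      (∫ τ in (s - 2 * π)..s, (K 0 θ * (K τ θ)⁻¹) *ᵥ φ τ (x0 (τ + θ)) (y τ)) ⬝ᵥ dx0 θ =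
      ∫ r in (0 : ℝ)..(2 * π), (φ (r - θ) (x0 r) (y (r - θ))) ⬝ᵥ dx0 r := by
  intro s θ
  have hx0 : Continuous x0 := by
    apply continuous_pi; intro i
    fin_cases i <;> simp [x0] <;> fun_prop
  set f : ℝ → Fin 2 → ℝ := fun τ => φ τ (x0 (τ + θ)) (y τ) with hfdef
  have hfc : Continuous f :=
    hφ.comp (continuous_id.prodMk
      (((hx0.comp (continuous_id.add continuous_const)).prodMk hy)))
  have hf0 : Continuous fun τ => f τ 0 := (continuous_apply 0).comp hfc
  have hf1 : Continuous fun τ => f τ 1 := (continuous_apply 1).comp hfc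
  have hgc : Continuous fun τ => (K 0 θ * B τ θ) *ᵥ f τ := by
    apply continuous_pi; intro i
    fin_cases i <;>
      simp [Matrix.mulVec, dotProduct, Fin.sum_univ_two, K, B, Matrix.mul_apply] <;>
      fun_prop
  -- define h and its periodicity
  set h : ℝ → ℝ := fun τ => f τ ⬝ᵥ dx0 (τ + θ) with hhdef
  have hper : Function.Periodic h (2 * π) := by
    intro τ
    have hx : ∀ a : ℝ, x0 (a + 2 * π) = x0 a := by
      intro a; simp [x0, Real.sin_add_two_pi, Real.cos_add_two_pi]
    have hdx : ∀ a : ℝ, dx0 (a + 2 * π) = dx0 a := by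
      intro a; simp [dx0, Real.sin_add_two_pi, Real.cos_add_two_pi]
    simp only [hhdef, hfdef]
    have e1 : τ + 2 * π + θ = (τ + θ) + 2 * π := by ring
    rw [e1, hx, hdx, hφper, hyper]
  have hhc : Continuous h := by
    simp only [hhdef, dotProduct, Fin.sum_univ_two, dx0]
    simp
    fun_prop
  -- the continuous linear map given by dotting with `dx0 θ`
  let L : (Fin 2 → ℝ) →L[ℝ] ℝ := LinearMap.toContinuousLinearMap
    { toFun := fun w => w ⬝ᵥ dx0 θ
      map_add' := fun a b => add_dotProduct a b _
      map_smul' := fun c a => smul_dotProduct c a _ }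
  have hL : ∀ w, L w = w ⬝ᵥ dx0 θ := fun w => rfl
  have step1 :
      (∫ τ in (s - 2 * π)..s, (K 0 θ * (K τ θ)⁻¹) *ᵥ f τ) ⬝ᵥ dx0 θ =
      ∫ τ in (s - 2 * π)..s, h τ := by
    simp only [K_inv]
    rw [← hL, ← L.intervalIntegral_comp_comm (hgc.intervalIntegrable _ _)]
    apply intervalIntegral.integral_congr
    intro τ _
    exact (hL _).trans (key τ θ (f τ))
  rw [step1]
  have step2 : ∫ τ in (s - 2 * π)..s, h τ = ∫ τ in (-θ)..(-θ + 2 * π), h τ := by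
    have := hper.intervalIntegral_add_eq (s - 2 * π) (-θ)
    simpa using this
  rw [step2]
  have step3 : ∀ r : ℝ, (φ (r - θ) (x0 r) (y (r - θ))) ⬝ᵥ dx0 r = h (r - θ) := by
    intro r
    simp only [hhdef, hfdef, sub_add_cancel]
  rw [intervalIntegral.integral_congr (g := fun r => h (r - θ)) (fun r _ => step3 r),
    intervalIntegral.integral_comp_sub_right h θ]
  norm_num
  ring_nf
end

section
/- If ∫₀^{2π} ⟨φ(r−θ, x₀(r), y(r−θ)), ẋ₀(r)⟩ dr > 0 for every θ ∈ [0,2π], then for all s, θ ∈ ℝ the vector ∫_{s−2π}^{s} K(0,θ) K(τ,θ)⁻¹ φ(τ, x₀(τ+θ), y(τ)) dτ is nonzero. -/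
open Real Matrix MeasureTheory intervalIntegral

noncomputable def Kinv (t θ : ℝ) : Matrix (Fin 2) (Fin 2) ℝ :=
  !![Real.cos (t + θ), -Real.sin (t + θ);
     Real.exp (-(2 * t)) * Real.sin (t + θ), Real.exp (-(2 * t)) * Real.cos (t + θ)]

lemma K_mul_Kinv (t θ : ℝ) : K t θ * Kinv t θ = 1 := by
  have he : Real.exp (2 * t) * Real.exp (-(2 * t)) = 1 := by
    rw [← Real.exp_add]; simp
  have hs := Real.sin_sq_add_cos_sq (t + θ)
  ext i j
  fin_cases i <;> fin_cases j <;>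
    simp [K, Kinv, Matrix.mul_apply, Fin.sum_univ_two, Matrix.one_apply] <;>
    first
      | linear_combination Real.sin (t + θ) ^ 2 * he + hs
      | linear_combination Real.cos (t + θ) ^ 2 * he + hs
      | linear_combination Real.sin (t + θ) * Real.cos (t + θ) * he

lemma K_inv_eq (t θ : ℝ) : (K t θ)⁻¹ = Kinv t θ :=
  Matrix.inv_eq_right_inv (K_mul_Kinv t θ)

lemma key_pointwise (t θ : ℝ) (v : Fin 2 → ℝ) :
    dx0 θ ⬝ᵥ ((K 0 θ * (K t θ)⁻¹) *ᵥ v) = dx0 (t + θ) ⬝ᵥ v := by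
  rw [K_inv_eq]
  have hs := Real.sin_sq_add_cos_sq θ
  simp [K, Kinv, dx0, Matrix.mulVec, Matrix.mul_apply, dotProduct, Fin.sum_univ_two]
  linear_combination (Real.cos (t + θ) * v 0 - Real.sin (t + θ) * v 1) * hs

lemma x0_per (x : ℝ) : x0 (x + 2 * π) = x0 x := by
  simp [x0, Real.sin_add_two_pi, Real.cos_add_two_pi]

lemma dx0_per (x : ℝ) : dx0 (x + 2 * π) = dx0 x := by
  simp [dx0, Real.sin_add_two_pi, Real.cos_add_two_pi]

lemma x0_cont : Continuous x0 := by
  apply continuous_pi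
  intro i; fin_cases i <;> simp [x0] <;> fun_prop

/-- verification of assumption (A₂) in the example of Section 2.
Let `φ : ℝ × ℝ² × ℝ → ℝ²` be continuous and `2π`-periodic in its first argument, and
let `y : ℝ → ℝ` be a continuous `2π`-periodic function.  If
`∫₀^{2π} ⟨φ(r−θ, x₀(r), y(r−θ)), ẋ₀(r)⟩ dr > 0` for every `θ ∈ [0,2π]`, then for all
`s, θ ∈ ℝ` the vector `∫_{s−2π}^{s} K(0,θ)K(τ,θ)⁻¹ φ(τ, x₀(τ+θ), y(τ)) dτ` is
nonzero. -/
theorem stmt14 (φ : ℝ → (Fin 2 → ℝ) → ℝ → (Fin 2 → ℝ))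
    (hφ : Continuous fun p : ℝ × (Fin 2 → ℝ) × ℝ => φ p.1 p.2.1 p.2.2)
    (hφper : ∀ t x v, φ (t + 2 * π) x v = φ t x v)
    (y : ℝ → ℝ) (hy : Continuous y) (hyper : ∀ t, y (t + 2 * π) = y t)
    (hpos : ∀ θ ∈ Set.Icc (0 : ℝ) (2 * π),
      0 < ∫ r in (0 : ℝ)..(2 * π), (φ (r - θ) (x0 r) (y (r - θ))) ⬝ᵥ dx0 r) :
    ∀ s θ : ℝ,
      (∫ τ in (s - 2 * π)..s, (K 0 θ * (K τ θ)⁻¹) *ᵥ φ τ (x0 (τ + θ)) (y τ)) ≠ 0 := by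
  intro s θ h0
  set F : ℝ → Fin 2 → ℝ := fun τ => φ τ (x0 (τ + θ)) (y τ) with hFdef
  have hFc : Continuous F := by
    have : F = (fun p : ℝ × (Fin 2 → ℝ) × ℝ => φ p.1 p.2.1 p.2.2) ∘
        (fun τ => (τ, (x0 (τ + θ), y τ))) := rfl
    rw [this]
    exact hφ.comp (continuous_id.prodMk ((x0_cont.comp (by fun_prop)).prodMk hy))
  set f : ℝ → Fin 2 → ℝ := fun τ => (K 0 θ * (K τ θ)⁻¹) *ᵥ F τ with hfdef
  have hfc : Continuous f := by
    have : f = fun τ => (K 0 θ * Kinv τ θ) *ᵥ F τ := by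
      funext τ; simp [hfdef, K_inv_eq]
    rw [this]
    apply continuous_pi
    intro i
    have h0c : Continuous fun τ => F τ 0 := (continuous_apply 0).comp hFc
    have h1c : Continuous fun τ => F τ 1 := (continuous_apply 1).comp hFc
    fin_cases i <;>
      simp [Matrix.mulVec, Matrix.mul_apply, K, Kinv, dotProduct, Fin.sum_univ_two] <;>
      fun_prop
  have hInt : IntervalIntegrable f volume (s - 2 * π) s := hfc.intervalIntegrable _ _
  have hcomp : ∀ i, (∫ τ in (s - 2 * π)..s, f τ) i = ∫ τ in (s - 2 * π)..s, f τ i := by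
    intro i
    exact ((ContinuousLinearMap.proj i (R := ℝ) (φ := fun _ : Fin 2 => ℝ)).intervalIntegral_comp_comm hInt).symm
  have hI0 : ∀ i, Continuous fun τ => f τ i := fun i => (continuous_apply i).comp hfc
  have hdot : ∫ τ in (s - 2 * π)..s, dx0 θ ⬝ᵥ f τ
      = dx0 θ ⬝ᵥ (∫ τ in (s - 2 * π)..s, f τ) := by
    simp only [dotProduct, Fin.sum_univ_two]
    rw [intervalIntegral.integral_add (((hI0 0).intervalIntegrable _ _).const_mul _)
        (((hI0 1).intervalIntegrable _ _).const_mul _),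
      intervalIntegral.integral_const_mul, intervalIntegral.integral_const_mul,
      hcomp 0, hcomp 1]
  have e1 : ∫ τ in (s - 2 * π)..s, dx0 (τ + θ) ⬝ᵥ F τ = 0 := by
    have : ∀ τ, dx0 (τ + θ) ⬝ᵥ F τ = dx0 θ ⬝ᵥ f τ := fun τ => (key_pointwise τ θ (F τ)).symm
    simp only [this]
    rw [hdot, h0, dotProduct_zero]
  -- periodicity of the integrand
  have hgper : Function.Periodic (fun τ => dx0 (τ + θ) ⬝ᵥ F τ) (2 * π) := by
    intro τ
    have h1 : τ + 2 * π + θ = (τ + θ) + 2 * π := by ring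
    simp only [hFdef, h1, dx0_per, x0_per, hφper, hyper]
  have e2 : ∫ τ in (s - 2 * π)..s, dx0 (τ + θ) ⬝ᵥ F τ
      = ∫ τ in (0 : ℝ)..(2 * π), dx0 (τ + θ) ⬝ᵥ F τ := by
    have := hgper.intervalIntegral_add_eq (s - 2 * π) 0
    simpa using this
  -- change of variables
  set h : ℝ → ℝ := fun r => φ (r - θ) (x0 r) (y (r - θ)) ⬝ᵥ dx0 r with hhdef
  have hg_eq : ∀ τ, dx0 (τ + θ) ⬝ᵥ F τ = h (τ + θ) := by
    intro τ
    simp only [hhdef, hFdef, add_sub_cancel_right]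
    exact dotProduct_comm _ _
  have e3 : ∫ τ in (0 : ℝ)..(2 * π), dx0 (τ + θ) ⬝ᵥ F τ
      = ∫ r in θ..(2 * π + θ), h r := by
    simp only [hg_eq]
    simpa using intervalIntegral.integral_comp_add_right (a := (0:ℝ)) (b := 2 * π) h θ
  have hhper : Function.Periodic h (2 * π) := by
    intro r
    simp only [hhdef]
    have h1 : r + 2 * π - θ = (r - θ) + 2 * π := by ring
    rw [h1, hφper, hyper, x0_per, dx0_per]
  have e4 : ∫ r in θ..(2 * π + θ), h r = ∫ r in (0 : ℝ)..(2 * π), h r := by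
    have := hhper.intervalIntegral_add_eq θ 0
    rw [add_comm θ (2 * π)] at this
    simpa using this
  -- periodicity in θ and positivity
  set Φ : ℝ → ℝ := fun θ' => ∫ r in (0 : ℝ)..(2 * π), φ (r - θ') (x0 r) (y (r - θ')) ⬝ᵥ dx0 r
    with hΦdef
  have hΦper : Function.Periodic Φ (2 * π) := by
    intro θ'
    simp only [hΦdef]
    congr 1
    funext r
    have h1 : r - θ' = (r - (θ' + 2 * π)) + 2 * π := by ring
    rw [h1, hφper, hyper]
  obtain ⟨θ'', hθ''mem, hθ''⟩ := hΦper.exists_mem_Ico₀ Real.two_pi_pos θ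
  have hposθ : 0 < Φ θ'' := hpos θ'' ⟨hθ''mem.1, le_of_lt hθ''mem.2⟩
  have : (0 : ℝ) < 0 := by
    calc (0:ℝ) < Φ θ'' := hposθ
    _ = Φ θ := hθ''.symm
    _ = ∫ r in (0:ℝ)..(2*π), h r := rfl
    _ = 0 := by rw [← e4, ← e3, ← e2, e1]
  exact lt_irrefl 0 this
end
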